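/- arXiv:2207.14351 — 2 statements merged into one kernel-verified Lean document; each statement's English description precedes it below -/
import Mathlib

section
/- Let ω ∈ ℝ and let h: ℝ × ℝ → ℂ be a C¹ function, 2π-periodic in its second argument, such that |h(u,γ)| ≤ C(1+|u|)^{−2} and |∂_u h(u,γ)| + |∂_γ h(u,γ)| ≤ C(1+|u|)^{−2} for some C > 0 and all (u,γ). Then G(h)(u,γ) := −∫₀^{∞} h(u+s, γ+ωs) ds is well defined and C¹, and satisfies (∂_u + ω ∂_γ) G(h) = h on ℝ × ℝ. -/
/-!
Along the characteristics `s ↦ (u + s, γ + ω s)` of `∂_u + ω ∂_γ`, both `h` and `Dh` are dominated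
by a translate of the integrable weight `C (1 + t²)⁻¹`, uniformly for base points in a unit ball.
Dominated convergence therefore lets us differentiate `G h` under the integral sign, with
continuous derivative. Applying that derivative to the direction `(1, ω)` gives the integral over
`(0, ∞)` of the derivative of `s ↦ h (u + s, γ + ω s)`, which by the fundamental theorem of
calculus and the decay of `h` equals `-h (u, γ)`.
-/

open MeasureTheory Set Metric Filter Topology

lemma ContinuousLinearMap.opNorm_le_apply_one_zero_add_apply_zero_one
    {F : Type*} [NormedAddCommGroup F] [NormedSpace ℝ F] (D : ℝ × ℝ →L[ℝ] F) :
    ‖D‖ ≤ ‖D (1, 0)‖ + ‖D (0, 1)‖ := by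
  refine D.opNorm_le_bound (by positivity) fun v => ?_
  have hv : D v = v.1 • D (1, 0) + v.2 • D (0, 1) := by
    rw [← D.map_smul, ← D.map_smul, ← D.map_add]
    congr 1
    ext <;> simp
  calc ‖D v‖ ≤ |v.1| * ‖D (1, 0)‖ + |v.2| * ‖D (0, 1)‖ := by
        rw [hv, ← Real.norm_eq_abs, ← Real.norm_eq_abs, ← norm_smul, ← norm_smul]
        exact norm_add_le _ _
    _ ≤ ‖v‖ * ‖D (1, 0)‖ + ‖v‖ * ‖D (0, 1)‖ := by
        gcongr
        · exact _root_.norm_fst_le v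
        · exact _root_.norm_snd_le v
    _ = (‖D (1, 0)‖ + ‖D (0, 1)‖) * ‖v‖ := by ring

lemma ContinuousLinearMap.apply_one_zero_add_mul_apply_zero_one (D : ℝ × ℝ →L[ℝ] ℂ) (ω : ℝ) :
    D (1, 0) + (ω : ℂ) * D (0, 1) = D (1, ω) := by
  rw [← Complex.real_smul, ← D.map_smul, ← D.map_add]
  simp

lemma div_one_add_abs_sq_le_mul_inv {C : ℝ} (hC : 0 ≤ C) (t : ℝ) :
    C / (1 + |t|) ^ 2 ≤ C * (1 + t ^ 2)⁻¹ := by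
  rw [div_eq_mul_inv]
  gcongr
  nlinarith [abs_nonneg t, sq_abs t]

lemma inv_one_add_sq_le_of_abs_sub_le {x y : ℝ} (h : |x - y| ≤ 1) :
    (1 + x ^ 2)⁻¹ ≤ 3 * (1 + y ^ 2)⁻¹ := by
  rw [← div_eq_mul_inv, le_div_iff₀ (by positivity), inv_mul_le_iff₀ (by positivity)]
  obtain ⟨h₁, h₂⟩ := abs_le.1 h
  nlinarith [sq_nonneg (x - (y - x)), mul_nonneg (sub_nonneg.2 h₁) (sub_nonneg.2 h₂)]

section Transport

variable {F : Type*} [NormedAddCommGroup F] {ω C : ℝ}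

lemma continuous_comp_characteristic {X : Type*} [TopologicalSpace X] {g : ℝ × ℝ → X}
    (hg : Continuous g) (p : ℝ × ℝ) :
    Continuous fun s : ℝ => g (p.1 + s, p.2 + ω * s) := by
  fun_prop

lemma integrable_comp_characteristic {g : ℝ × ℝ → F} (hg : Continuous g)
    (hdecay : ∀ q, ‖g q‖ ≤ C * (1 + q.1 ^ 2)⁻¹) (p : ℝ × ℝ) :
    Integrable fun s : ℝ => g (p.1 + s, p.2 + ω * s) :=
  ((integrable_inv_one_add_sq.comp_add_left p.1).const_mul C).mono'
    (continuous_comp_characteristic hg p).aestronglyMeasurable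
    (Eventually.of_forall fun _ => hdecay _)

lemma norm_comp_characteristic_le_of_mem_ball {g : ℝ × ℝ → F} (hC : 0 ≤ C)
    (hdecay : ∀ q, ‖g q‖ ≤ C * (1 + q.1 ^ 2)⁻¹) {p x : ℝ × ℝ} (hx : x ∈ ball p 1) (s : ℝ) :
    ‖g (x.1 + s, x.2 + ω * s)‖ ≤ 3 * C * (1 + (p.1 + s) ^ 2)⁻¹ := by
  have hclose : |(x.1 + s) - (p.1 + s)| ≤ 1 := by
    rw [add_sub_add_right_eq_sub, ← Real.dist_eq]
    exact (le_max_left _ _).trans (Prod.dist_eq.symm.trans_lt hx).le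
  calc ‖g (x.1 + s, x.2 + ω * s)‖ ≤ C * (1 + (x.1 + s) ^ 2)⁻¹ := hdecay _
    _ ≤ C * (3 * (1 + (p.1 + s) ^ 2)⁻¹) := by
        gcongr; exact inv_one_add_sq_le_of_abs_sub_le hclose
    _ = 3 * C * (1 + (p.1 + s) ^ 2)⁻¹ := by ring

lemma continuous_integral_comp_characteristic [NormedSpace ℝ F] {g : ℝ × ℝ → F} (hC : 0 ≤ C)
    (hg : Continuous g)
    (hdecay : ∀ q, ‖g q‖ ≤ C * (1 + q.1 ^ 2)⁻¹) (S : Set ℝ) :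
    Continuous fun p : ℝ × ℝ => ∫ s in S, g (p.1 + s, p.2 + ω * s) := by
  refine continuous_iff_continuousAt.2 fun p => continuousAt_of_dominated
    (Eventually.of_forall fun x => (continuous_comp_characteristic hg x).aestronglyMeasurable)
    ?_ ((integrable_inv_one_add_sq.comp_add_left p.1).const_mul (3 * C)).integrableOn
    (Eventually.of_forall fun s => by fun_prop)
  filter_upwards [ball_mem_nhds p one_pos] with x hx
  exact Eventually.of_forall (norm_comp_characteristic_le_of_mem_ball hC hdecay hx)

lemma tendsto_comp_characteristic_atTop_zero {g : ℝ × ℝ → F}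
    (hdecay : ∀ q, ‖g q‖ ≤ C * (1 + q.1 ^ 2)⁻¹) (p : ℝ × ℝ) :
    Tendsto (fun s : ℝ => g (p.1 + s, p.2 + ω * s)) atTop (𝓝 0) := by
  have hweight : Tendsto (fun s : ℝ => C * (1 + (p.1 + s) ^ 2)⁻¹) atTop (𝓝 0) := by
    simpa using (tendsto_inv_atTop_zero.comp <| tendsto_atTop_add_const_left _ 1 <|
      (tendsto_pow_atTop two_ne_zero).comp <|
        tendsto_atTop_add_const_left _ p.1 tendsto_id).const_mul C
  exact squeeze_zero_norm (fun s => hdecay _) hweight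

end Transport

section Differentiable

variable {F : Type*} [NormedAddCommGroup F] [NormedSpace ℝ F] {ω C : ℝ} {h : ℝ × ℝ → F}

lemma hasFDerivAt_comp_characteristic (hh : Differentiable ℝ h) (s : ℝ) (p : ℝ × ℝ) :
    HasFDerivAt (fun x : ℝ × ℝ => h (x.1 + s, x.2 + ω * s))
      (fderiv ℝ h (p.1 + s, p.2 + ω * s)) p := by
  have htranslate : HasFDerivAt (fun x : ℝ × ℝ => x + (s, ω * s))
      (ContinuousLinearMap.id ℝ (ℝ × ℝ)) p := (hasFDerivAt_id p).add_const _
  exact (hh _).hasFDerivAt.comp p htranslate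

lemma hasDerivAt_comp_characteristic (hh : Differentiable ℝ h) (p : ℝ × ℝ) (s : ℝ) :
    HasDerivAt (fun s : ℝ => h (p.1 + s, p.2 + ω * s))
      (fderiv ℝ h (p.1 + s, p.2 + ω * s) (1, ω)) s := by
  have hline : HasDerivAt (fun s : ℝ => ((p.1 + s, p.2 + ω * s) : ℝ × ℝ)) (1, ω) s := by
    simpa using ((hasDerivAt_id s).const_add p.1).prodMk
      (((hasDerivAt_id s).const_mul ω).const_add p.2)
  exact (hh _).hasFDerivAt.comp_hasDerivAt s hline

lemma hasFDerivAt_integral_comp_characteristic (hC : 0 ≤ C) (hh : ContDiff ℝ 1 h)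
    (hdecay : ∀ q, ‖h q‖ ≤ C * (1 + q.1 ^ 2)⁻¹)
    (hdecay' : ∀ q, ‖fderiv ℝ h q‖ ≤ C * (1 + q.1 ^ 2)⁻¹) (S : Set ℝ) (p : ℝ × ℝ) :
    HasFDerivAt (fun x : ℝ × ℝ => ∫ s in S, h (x.1 + s, x.2 + ω * s))
      (∫ s in S, fderiv ℝ h (p.1 + s, p.2 + ω * s)) p :=
  hasFDerivAt_integral_of_dominated_of_fderiv_le (ball_mem_nhds p one_pos)
    (Eventually.of_forall fun x =>
      (continuous_comp_characteristic hh.continuous x).aestronglyMeasurable)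
    (integrable_comp_characteristic hh.continuous hdecay p).integrableOn
    (continuous_comp_characteristic (hh.continuous_fderiv one_ne_zero) p).aestronglyMeasurable
    (Eventually.of_forall fun s _ hx => norm_comp_characteristic_le_of_mem_ball hC hdecay' hx s)
    ((integrable_inv_one_add_sq.comp_add_left p.1).const_mul (3 * C)).integrableOn
    (Eventually.of_forall fun s x _ =>
      hasFDerivAt_comp_characteristic (hh.differentiable one_ne_zero) s x)

lemma contDiff_integral_comp_characteristic (hC : 0 ≤ C) (hh : ContDiff ℝ 1 h)
    (hdecay : ∀ q, ‖h q‖ ≤ C * (1 + q.1 ^ 2)⁻¹)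
    (hdecay' : ∀ q, ‖fderiv ℝ h q‖ ≤ C * (1 + q.1 ^ 2)⁻¹) (S : Set ℝ) :
    ContDiff ℝ 1 fun p : ℝ × ℝ => ∫ s in S, h (p.1 + s, p.2 + ω * s) := by
  have hderiv := hasFDerivAt_integral_comp_characteristic (ω := ω) hC hh hdecay hdecay' S
  rw [contDiff_one_iff_fderiv]
  refine ⟨fun p => (hderiv p).differentiableAt, ?_⟩
  rw [show fderiv ℝ _ = _ from funext fun p => (hderiv p).fderiv]
  exact continuous_integral_comp_characteristic hC (hh.continuous_fderiv one_ne_zero) hdecay' S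

lemma integral_Ioi_fderiv_comp_characteristic_apply [CompleteSpace F] (hh : ContDiff ℝ 1 h)
    (hdecay : ∀ q, ‖h q‖ ≤ C * (1 + q.1 ^ 2)⁻¹)
    (hdecay' : ∀ q, ‖fderiv ℝ h q‖ ≤ C * (1 + q.1 ^ 2)⁻¹) (p : ℝ × ℝ) :
    (∫ s in Ioi (0 : ℝ), fderiv ℝ h (p.1 + s, p.2 + ω * s)) (1, ω) = -h p := by
  have hint := integrable_comp_characteristic (ω := ω) (hh.continuous_fderiv one_ne_zero) hdecay' p
  rw [ContinuousLinearMap.integral_apply hint.integrableOn,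
    integral_Ioi_of_hasDerivAt_of_tendsto'
      (fun s _ => hasDerivAt_comp_characteristic (hh.differentiable one_ne_zero) p s)
      ((ContinuousLinearMap.apply ℝ F ((1, ω) : ℝ × ℝ)).integrable_comp hint).integrableOn
      (tendsto_comp_characteristic_atTop_zero hdecay p)]
  simp

end Differentiable

open MeasureTheory in
theorem stmt13_general (ω : ℝ) (C : ℝ) (hC : 0 < C) (h : ℝ × ℝ → ℂ)
    (hsmooth : ContDiff ℝ 1 h)
    (hbound : ∀ u γ : ℝ, ‖h (u, γ)‖ ≤ C / (1 + |u|) ^ 2)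
    (hdbound : ∀ u γ : ℝ,
      ‖fderiv ℝ h (u, γ) (1, 0)‖ + ‖fderiv ℝ h (u, γ) (0, 1)‖ ≤ C / (1 + |u|) ^ 2) :
    (∀ u γ : ℝ, IntegrableOn (fun s => h (u + s, γ + ω * s)) (Set.Ioi (0 : ℝ))) ∧
    ContDiff ℝ 1 (fun p : ℝ × ℝ => -∫ s in Set.Ioi (0 : ℝ), h (p.1 + s, p.2 + ω * s)) ∧
    ∀ u γ : ℝ,
      fderiv ℝ (fun p : ℝ × ℝ => -∫ s in Set.Ioi (0 : ℝ), h (p.1 + s, p.2 + ω * s))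
          (u, γ) (1, 0)
        + (ω : ℂ) * fderiv ℝ
            (fun p : ℝ × ℝ => -∫ s in Set.Ioi (0 : ℝ), h (p.1 + s, p.2 + ω * s))
            (u, γ) (0, 1)
      = h (u, γ) := by
  have hdecay : ∀ q : ℝ × ℝ, ‖h q‖ ≤ C * (1 + q.1 ^ 2)⁻¹ := fun q =>
    (hbound q.1 q.2).trans (div_one_add_abs_sq_le_mul_inv hC.le q.1)
  have hdecay' : ∀ q : ℝ × ℝ, ‖fderiv ℝ h q‖ ≤ C * (1 + q.1 ^ 2)⁻¹ := fun q =>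
    ((fderiv ℝ h q).opNorm_le_apply_one_zero_add_apply_zero_one.trans (hdbound q.1 q.2)).trans
      (div_one_add_abs_sq_le_mul_inv hC.le q.1)
  refine ⟨fun u γ => (integrable_comp_characteristic hsmooth.continuous hdecay (u, γ)).integrableOn,
    (contDiff_integral_comp_characteristic hC.le hsmooth hdecay hdecay' _).neg, fun u γ => ?_⟩
  have hG := hasFDerivAt_integral_comp_characteristic (ω := ω) hC.le hsmooth hdecay hdecay'
    (Ioi (0 : ℝ)) (u, γ)
  rw [hG.fun_neg.fderiv, ContinuousLinearMap.apply_one_zero_add_mul_apply_zero_one, neg_apply,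
    integral_Ioi_fderiv_comp_characteristic_apply hsmooth hdecay hdecay', neg_neg]

open MeasureTheory in
theorem stmt13 (ω : ℝ) (C : ℝ) (hC : 0 < C) (h : ℝ × ℝ → ℂ)
    (hsmooth : ContDiff ℝ 1 h)
    (hper : ∀ u γ : ℝ, h (u, γ + 2 * Real.pi) = h (u, γ))
    (hbound : ∀ u γ : ℝ, ‖h (u, γ)‖ ≤ C / (1 + |u|) ^ 2)
    (hdbound : ∀ u γ : ℝ,
      ‖fderiv ℝ h (u, γ) (1, 0)‖ + ‖fderiv ℝ h (u, γ) (0, 1)‖ ≤ C / (1 + |u|) ^ 2) :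
    (∀ u γ : ℝ, IntegrableOn (fun s => h (u + s, γ + ω * s)) (Set.Ioi (0 : ℝ))) ∧
    ContDiff ℝ 1 (fun p : ℝ × ℝ => -∫ s in Set.Ioi (0 : ℝ), h (p.1 + s, p.2 + ω * s)) ∧
    ∀ u γ : ℝ,
      fderiv ℝ (fun p : ℝ × ℝ => -∫ s in Set.Ioi (0 : ℝ), h (p.1 + s, p.2 + ω * s))
          (u, γ) (1, 0)
        + (ω : ℂ) * fderiv ℝ
            (fun p : ℝ × ℝ => -∫ s in Set.Ioi (0 : ℝ), h (p.1 + s, p.2 + ω * s))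
            (u, γ) (0, 1)
      = h (u, γ) :=
  stmt13_general ω C hC h hsmooth hbound hdbound
end

section
/- For all integers j ≥ 0 and ℓ ≥ 0 there exist real numbers a₀, …, a_j, with a₀ = 1/(ℓ+1), such that the polynomial P(x,y) = Σ_{i=0}^{j} a_i x^{2(j−i)} y^{ℓ+2i+1} satisfies y·∂ₓP + x·∂_yP = x^{2j+1} y^{ℓ}. In particular every homogeneous polynomial which is odd in x lies in the range of the operator L(C) = y ∂ₓC + x ∂_yC acting on homogeneous polynomials (even in x) of one degree higher. -/
/-!
`L = y ∂ₓ + x ∂_y` sends `aᵢ x^{2(j-i)} y^{ℓ+2i+1}` to `aᵢ (ℓ+2i+1) x^{2(j-i)+1} y^{ℓ+2i}`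
plus `2 (j-i) aᵢ x^{2(j-i)-1} y^{ℓ+2i+2}`. The recursion `aᵢ₊₁ (ℓ+2i+3) = -2 (j-i) aᵢ` makes
the second part cancel the first part of the next monomial, so `L P` telescopes to the `i = 0`
term `a₀ (ℓ+1) x^{2j+1} y^ℓ`; the recursion itself gives `a_{j+1} = 0`, which closes the sum.
-/

open Finset

noncomputable def homologicalOp (P : ℝ → ℝ → ℝ) (x y : ℝ) : ℝ :=
  y * deriv (fun x' => P x' y) x + x * deriv (fun y' => P x y') y

theorem homologicalOp_sum_monomial {ι : Type*} (s : Finset ι) (c : ι → ℝ) (m n : ι → ℕ)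
    (x y : ℝ) :
    homologicalOp (fun x y => ∑ i ∈ s, c i * x ^ m i * y ^ n i) x y =
      ∑ i ∈ s, (c i * m i * x ^ (m i - 1) * y ^ (n i + 1)
        + c i * n i * x ^ (m i + 1) * y ^ (n i - 1)) := by
  have hx : HasDerivAt (fun x' => ∑ i ∈ s, c i * x' ^ m i * y ^ n i)
      (∑ i ∈ s, c i * (m i * x ^ (m i - 1)) * y ^ n i) x :=
    HasDerivAt.fun_sum fun i _ => ((hasDerivAt_pow (m i) x).const_mul (c i)).mul_const _
  have hy : HasDerivAt (fun y' => ∑ i ∈ s, c i * x ^ m i * y' ^ n i)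
      (∑ i ∈ s, c i * x ^ m i * (n i * y ^ (n i - 1))) y :=
    HasDerivAt.fun_sum fun i _ => (hasDerivAt_pow (n i) y).const_mul _
  rw [homologicalOp, hx.deriv, hy.deriv, mul_sum, mul_sum, ← sum_add_distrib]
  refine sum_congr rfl fun i _ => ?_
  ring

noncomputable def homologicalCoeff (j ℓ : ℕ) : ℕ → ℝ
  | 0 => 1 / ((ℓ : ℝ) + 1)
  | i + 1 => -(2 * ((j - i : ℕ) : ℝ)) * homologicalCoeff j ℓ i / ((ℓ : ℝ) + 2 * i + 3)

theorem homologicalCoeff_zero_mul (j ℓ : ℕ) : homologicalCoeff j ℓ 0 * ((ℓ : ℝ) + 1) = 1 := by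
  rw [homologicalCoeff]
  field_simp

theorem homologicalCoeff_succ_mul (j ℓ i : ℕ) :
    homologicalCoeff j ℓ (i + 1) * ((ℓ : ℝ) + 2 * i + 3) =
      -(2 * ((j - i : ℕ) : ℝ)) * homologicalCoeff j ℓ i := by
  have h : (ℓ : ℝ) + 2 * i + 3 ≠ 0 := by positivity
  rw [homologicalCoeff]
  field_simp

theorem homologicalCoeff_self_succ (j ℓ : ℕ) : homologicalCoeff j ℓ (j + 1) = 0 := by
  simp [homologicalCoeff]

noncomputable def telescopingTerm (j ℓ : ℕ) (x y : ℝ) (i : ℕ) : ℝ :=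
  homologicalCoeff j ℓ i * ((ℓ : ℝ) + 2 * i + 1) * x ^ (2 * (j - i) + 1) * y ^ (ℓ + 2 * i)

theorem telescopingTerm_zero (j ℓ : ℕ) (x y : ℝ) :
    telescopingTerm j ℓ x y 0 = x ^ (2 * j + 1) * y ^ ℓ := by
  simp only [telescopingTerm, CharP.cast_eq_zero, mul_zero, add_zero, Nat.sub_zero,
    homologicalCoeff_zero_mul, one_mul]

theorem telescopingTerm_self_succ (j ℓ : ℕ) (x y : ℝ) : telescopingTerm j ℓ x y (j + 1) = 0 := by
  simp [telescopingTerm, homologicalCoeff_self_succ]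

theorem homologicalCoeff_monomial_image_eq_telescopingTerm_sub {j i : ℕ} (hi : i ≤ j) (ℓ : ℕ)
    (x y : ℝ) :
    homologicalCoeff j ℓ i * ((2 * (j - i) : ℕ) : ℝ) * x ^ (2 * (j - i) - 1)
        * y ^ (ℓ + 2 * i + 1 + 1)
      + homologicalCoeff j ℓ i * ((ℓ + 2 * i + 1 : ℕ) : ℝ) * x ^ (2 * (j - i) + 1)
        * y ^ (ℓ + 2 * i + 1 - 1)
      = telescopingTerm j ℓ x y i - telescopingTerm j ℓ x y (i + 1) := by
  rcases hi.lt_or_eq with hlt | rfl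
  · obtain ⟨k, hk⟩ : ∃ k, j - i = k + 1 := ⟨j - i - 1, by omega⟩
    have hk' : j - (i + 1) = k := by omega
    have hrec := homologicalCoeff_succ_mul j ℓ i
    rw [hk] at hrec
    simp only [telescopingTerm, hk', hk, show 2 * (k + 1) - 1 = 2 * k + 1 by omega,
      Nat.add_sub_cancel]
    push_cast at hrec ⊢
    linear_combination (x ^ (2 * k + 1) * y ^ (ℓ + 2 * i + 2)) * hrec
  · simp [telescopingTerm, homologicalCoeff_self_succ]

theorem stmt16 (j ℓ : ℕ) :
    ∃ a : Fin (j + 1) → ℝ, a 0 = 1 / ((ℓ : ℝ) + 1) ∧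
      ∀ x y : ℝ,
        y * deriv (fun x' : ℝ =>
              ∑ i : Fin (j + 1), a i * x' ^ (2 * (j - (i : ℕ))) * y ^ (ℓ + 2 * (i : ℕ) + 1)) x
          + x * deriv (fun y' : ℝ =>
              ∑ i : Fin (j + 1), a i * x ^ (2 * (j - (i : ℕ))) * y' ^ (ℓ + 2 * (i : ℕ) + 1)) y
        = x ^ (2 * j + 1) * y ^ ℓ := by
  refine ⟨fun i => homologicalCoeff j ℓ i, rfl, fun x y => ?_⟩
  change homologicalOp (fun x y => ∑ i : Fin (j + 1),
    homologicalCoeff j ℓ i * x ^ (2 * (j - (i : ℕ))) * y ^ (ℓ + 2 * (i : ℕ) + 1)) x y = _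
  rw [homologicalOp_sum_monomial, Fin.sum_univ_eq_sum_range
    (fun i => homologicalCoeff j ℓ i * ((2 * (j - i) : ℕ) : ℝ) * x ^ (2 * (j - i) - 1)
        * y ^ (ℓ + 2 * i + 1 + 1)
      + homologicalCoeff j ℓ i * ((ℓ + 2 * i + 1 : ℕ) : ℝ) * x ^ (2 * (j - i) + 1)
        * y ^ (ℓ + 2 * i + 1 - 1))]
  calc ∑ i ∈ range (j + 1), _
      = ∑ i ∈ range (j + 1), (telescopingTerm j ℓ x y i - telescopingTerm j ℓ x y (i + 1)) :=
        sum_congr rfl fun i hi => homologicalCoeff_monomial_image_eq_telescopingTerm_sub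
          (Nat.lt_succ_iff.mp (mem_range.mp hi)) ℓ x y
    _ = x ^ (2 * j + 1) * y ^ ℓ := by
        rw [sum_range_sub', telescopingTerm_zero, telescopingTerm_self_succ, sub_zero]
end
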